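/- (Quadratic convergence of Newton, Lemma 2.3) Assume 8α ≤ 1 where α = M ν⁻² F, and set β = ν(1 − 2α). Let u ∈ V be a weak NSE solution and let (u_k)_{k≥0} be a sequence in V with ‖G u_0‖ ≤ 2 ν⁻¹ F such that for every k, u_{k+1} is a Newton step from u_k. If the initial guess satisfies (M/β) ‖G(u − u_0)‖ < 1, then for every k, ‖G(u − u_{k+1})‖ ≤ (M/β) ‖G(u − u_k)‖², and ‖G(u − u_k)‖ → 0 as k → ∞. -/

import Mathlib

/-!
Testing the error equation of a Newton step with the new error `u - u_{k+1}` and using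
skew-symmetry of `b` leaves only the trilinear terms `b(e_k, e_k, e_{k+1})` and
`b(e_{k+1}, u_k, e_{k+1})`. The first gives the quadratic term; the second is absorbed into the
viscous term as long as `ν ‖G u_k‖ ≤ 2F`, which is where `β = ν (1 - 2α)` comes from. That bound
propagates along the iteration because `8α ≤ 1` makes the ball `ν ‖G w‖ ≤ 2F` invariant under
Newton steps. Quadratic decay `e_{k+1} ≤ K e_k²` with `K e_0 < 1` then forces `e_k → 0`.
-/

open Filter Topology

theorem tendsto_zero_of_le_mul_sq {e : ℕ → ℝ} {K : ℝ} (he : ∀ k, 0 ≤ e k) (hK : 0 ≤ K)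
    (hstep : ∀ k, e (k + 1) ≤ K * e k ^ 2) (h0 : K * e 0 < 1) :
    Tendsto e atTop (𝓝 0) := by
  set r := K * e 0
  have hr : 0 ≤ r := mul_nonneg hK (he 0)
  have hgeom : ∀ k, e k ≤ r ^ k * e 0 := by
    intro k
    induction k with
    | zero => simp
    | succ k ih =>
      have hrk : r ^ k ≤ 1 := pow_le_one₀ hr h0.le
      calc e (k + 1) ≤ K * e k ^ 2 := hstep k
        _ ≤ K * (r ^ k * e 0) ^ 2 := by gcongr; exact he k
        _ = r ^ k * r * (r ^ k * e 0) := by ring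
        _ ≤ 1 * r * (r ^ k * e 0) := by gcongr; exact mul_nonneg (pow_nonneg hr k) (he 0)
        _ = r ^ (k + 1) * e 0 := by ring
  have hlim : Tendsto (fun k => r ^ k * e 0) atTop (𝓝 0) := by
    simpa using (tendsto_pow_atTop_nhds_zero_of_lt_one hr h0).mul_const (e 0)
  exact squeeze_zero he hgeom hlim

section Newton

variable {V W : Type*} [NormedAddCommGroup V] [InnerProductSpace ℝ V]
  [NormedAddCommGroup W] [InnerProductSpace ℝ W]
  (G : V →ₗ[ℝ] W) (b : V →ₗ[ℝ] V →ₗ[ℝ] V →ₗ[ℝ] ℝ) (f : V →ₗ[ℝ] ℝ) (ν : ℝ)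

def IsWeakSolution (u : V) : Prop :=
  ∀ v, ν * (inner ℝ (G u) (G v) : ℝ) + b u u v = f v

def IsNewtonStep (w w' : V) : Prop :=
  ∀ v, ν * (inner ℝ (G w') (G v) : ℝ) + b w w' v + b w' w v = f v + b w w v

variable {G b f ν}

theorem IsNewtonStep.error_eq (hbskew : ∀ u v : V, b u v v = 0) {u w w' : V}
    (hu : IsWeakSolution G b f ν u) (h : IsNewtonStep G b f ν w w') :
    ν * ‖G (u - w')‖ ^ 2 + b (u - w) (u - w) (u - w') + b (u - w') w (u - w') = 0 := by
  have hsol := hu (u - w')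
  have hnewton := h (u - w')
  have hskew := hbskew w (u - w')
  rw [← real_inner_self_eq_norm_sq]
  simp only [map_sub, LinearMap.sub_apply, inner_sub_left, inner_sub_right] at hsol hnewton hskew ⊢
  rw [real_inner_comm (G w') (G u)] at hsol ⊢
  linear_combination hsol - hnewton - hskew

theorem IsNewtonStep.mul_norm_le_of_mul_norm_le (hbskew : ∀ u v : V, b u v v = 0) {M F : ℝ}
    (hb : ∀ u w v : V, |b u w v| ≤ M * ‖G u‖ * ‖G w‖ * ‖G v‖) (hf : ∀ v : V, |f v| ≤ F * ‖G v‖)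
    (hM : 0 ≤ M) (hν : 0 < ν) (hMF : 8 * (M * F) ≤ ν ^ 2) {w w' : V}
    (hw : ν * ‖G w‖ ≤ 2 * F) (h : IsNewtonStep G b f ν w w') :
    ν * ‖G w'‖ ≤ 2 * F := by
  set a := ‖G w'‖
  set c := ‖G w‖
  have energy : ν * a ^ 2 ≤ (F + M * c ^ 2 + M * c * a) * a := by
    have htest := h w'
    rw [hbskew w w', real_inner_self_eq_norm_sq] at htest
    linarith [hb w' w w', hb w w w', neg_abs_le (b w' w w'), le_abs_self (b w w w'),
      le_abs_self (f w'), hf w']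
  have hc : 0 ≤ c := norm_nonneg _
  have ha : 0 ≤ a := norm_nonneg _
  rcases ha.eq_or_lt with ha0 | hapos
  · rw [← ha0, mul_zero]; linarith [mul_nonneg hν.le hc]
  have hlin : ν * a ≤ F + M * c ^ 2 + M * c * a := le_of_mul_le_mul_right (by linarith) hapos
  have hMc : 4 * (M * c) ≤ ν := by nlinarith [mul_le_mul_of_nonneg_left hw hM]
  have hMc2 : 2 * (M * c ^ 2) ≤ F := by nlinarith [mul_le_mul_of_nonneg_right hMc hc]
  linarith [mul_le_mul_of_nonneg_right hMc ha]

theorem IsNewtonStep.mul_norm_sub_le_mul_norm_sub_sq (hbskew : ∀ u v : V, b u v v = 0) {M F : ℝ}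
    (hb : ∀ u w v : V, |b u w v| ≤ M * ‖G u‖ * ‖G w‖ * ‖G v‖) (hM : 0 ≤ M) (hν : 0 < ν)
    {u w w' : V} (hu : IsWeakSolution G b f ν u) (hw : ν * ‖G w‖ ≤ 2 * F)
    (h : IsNewtonStep G b f ν w w') :
    ν * (1 - 2 * (M * F / ν ^ 2)) * ‖G (u - w')‖ ≤ M * ‖G (u - w)‖ ^ 2 := by
  set x := ‖G (u - w')‖
  set y := ‖G (u - w)‖
  have hx : 0 ≤ x := norm_nonneg _
  have energy : ν * x ^ 2 ≤ M * y ^ 2 * x + M * ‖G w‖ * x ^ 2 := by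
    have := h.error_eq hbskew hu
    linarith [neg_abs_le (b (u - w) (u - w) (u - w')), neg_abs_le (b (u - w') w (u - w')),
      hb (u - w) (u - w) (u - w'), hb (u - w') w (u - w')]
  rcases hx.eq_or_lt with hx0 | hxpos
  · rw [← hx0, mul_zero]; exact mul_nonneg hM (sq_nonneg y)
  have hvisc : (ν ^ 2 - 2 * M * F) * x ≤ ν * (M * y ^ 2) := by
    refine le_of_mul_le_mul_right ?_ hxpos
    nlinarith [mul_le_mul_of_nonneg_left hw (mul_nonneg hM (sq_nonneg x))]
  refine le_of_mul_le_mul_left ?_ hν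
  calc ν * (ν * (1 - 2 * (M * F / ν ^ 2)) * x) = (ν ^ 2 - 2 * M * F) * x := by field_simp
    _ ≤ ν * (M * y ^ 2) := hvisc

end Newton

theorem newton_quadratic_convergence_general
    {V W : Type*} [NormedAddCommGroup V] [InnerProductSpace ℝ V]
    [NormedAddCommGroup W] [InnerProductSpace ℝ W]
    (G : V →ₗ[ℝ] W) (b : V →ₗ[ℝ] V →ₗ[ℝ] V →ₗ[ℝ] ℝ) (f : V →ₗ[ℝ] ℝ)
    (M F ν : ℝ) (hM : 0 < M) (hν : 0 < ν)
    (hbskew : ∀ u v : V, b u v v = 0)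
    (hb2 : ∀ u w v : V, |b u w v| ≤ M * ‖G u‖ * ‖G w‖ * ‖G v‖)
    (hf : ∀ v : V, |f v| ≤ F * ‖G v‖)
    (u : V) (hu : ∀ v : V, ν * (inner ℝ (G u) (G v) : ℝ) + b u u v = f v)
    (hα : 8 * (M * F / ν ^ 2) ≤ 1)
    (uk : ℕ → V) (h0 : ‖G (uk 0)‖ ≤ 2 * ν⁻¹ * F)
    (hstep : ∀ k, ∀ v : V, ν * (inner ℝ (G (uk (k + 1))) (G v) : ℝ) + b (uk k) (uk (k + 1)) v
      + b (uk (k + 1)) (uk k) v = f v + b (uk k) (uk k) v)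
    (hinit : (M / (ν * (1 - 2 * (M * F / ν ^ 2)))) * ‖G (u - uk 0)‖ < 1)
    : (∀ k, ‖G (u - uk (k + 1))‖ ≤ (M / (ν * (1 - 2 * (M * F / ν ^ 2)))) * ‖G (u - uk k)‖ ^ 2) ∧
      Filter.Tendsto (fun k => ‖G (u - uk k)‖) Filter.atTop (nhds 0) := by
  have hMF : 8 * (M * F) ≤ ν ^ 2 := by
    rwa [← mul_div_assoc, div_le_one (by positivity)] at hα
  have hβ : 0 < ν * (1 - 2 * (M * F / ν ^ 2)) := mul_pos hν (by linarith)
  have hnewton : ∀ k, IsNewtonStep G b f ν (uk k) (uk (k + 1)) := hstep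
  have hbound : ∀ k, ν * ‖G (uk k)‖ ≤ 2 * F := by
    intro k
    induction k with
    | zero => calc ν * ‖G (uk 0)‖ ≤ ν * (2 * ν⁻¹ * F) := by gcongr
        _ = 2 * F := by field_simp
    | succ k ih => exact (hnewton k).mul_norm_le_of_mul_norm_le hbskew hb2 hf hM.le hν hMF ih
  have hquad : ∀ k, ‖G (u - uk (k + 1))‖
      ≤ (M / (ν * (1 - 2 * (M * F / ν ^ 2)))) * ‖G (u - uk k)‖ ^ 2 := fun k => by
    rw [div_mul_eq_mul_div, le_div_iff₀ hβ, mul_comm]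
    exact (hnewton k).mul_norm_sub_le_mul_norm_sub_sq hbskew hb2 hM.le hν hu (hbound k)
  exact ⟨hquad, tendsto_zero_of_le_mul_sq (fun _ => norm_nonneg _) (by positivity) hquad hinit⟩

theorem newton_quadratic_convergence
    {V W : Type*} [NormedAddCommGroup V] [InnerProductSpace ℝ V]
    [NormedAddCommGroup W] [InnerProductSpace ℝ W]
    (G : V →ₗ[ℝ] W) (b : V →ₗ[ℝ] V →ₗ[ℝ] V →ₗ[ℝ] ℝ) (f : V →ₗ[ℝ] ℝ)
    (M F ν : ℝ) (hM : 0 < M) (hF : 0 ≤ F) (hν : 0 < ν)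
    (hbskew : ∀ u v : V, b u v v = 0)
    (hb1 : ∀ u w v : V, |b u w v| ≤ M * Real.sqrt ‖u‖ * Real.sqrt ‖G u‖ * ‖G w‖ * ‖G v‖)
    (hb2 : ∀ u w v : V, |b u w v| ≤ M * ‖G u‖ * ‖G w‖ * ‖G v‖)
    (hb3 : ∀ u w v : V, |b u w v| ≤ M * ‖G u‖ * ‖G w‖ * Real.sqrt ‖v‖ * Real.sqrt ‖G v‖)
    (hf : ∀ v : V, |f v| ≤ F * ‖G v‖)
    (u : V) (hu : ∀ v : V, ν * (inner ℝ (G u) (G v) : ℝ) + b u u v = f v)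
    (hα : 8 * (M * F / ν ^ 2) ≤ 1)
    (uk : ℕ → V) (h0 : ‖G (uk 0)‖ ≤ 2 * ν⁻¹ * F)
    (hstep : ∀ k, ∀ v : V, ν * (inner ℝ (G (uk (k + 1))) (G v) : ℝ) + b (uk k) (uk (k + 1)) v
      + b (uk (k + 1)) (uk k) v = f v + b (uk k) (uk k) v)
    (hinit : (M / (ν * (1 - 2 * (M * F / ν ^ 2)))) * ‖G (u - uk 0)‖ < 1)
    : (∀ k, ‖G (u - uk (k + 1))‖ ≤ (M / (ν * (1 - 2 * (M * F / ν ^ 2)))) * ‖G (u - uk k)‖ ^ 2) ∧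
      Filter.Tendsto (fun k => ‖G (u - uk k)‖) Filter.atTop (nhds 0) :=
  newton_quadratic_convergence_general G b f M F ν hM hν hbskew hb2 hf u hu hα uk h0 hstep hinit
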